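/- For every real a > 0, ∫₁^∞ (1/x) K₁( a (x²+1)/x ) dx = (π/(4a)) e^{−2a}. -/

import Mathlib

open MeasureTheory Real

/-- Modified Bessel function of the second kind, integral representation. -/
noncomputable def besselK (ν z : ℝ) : ℝ :=
  ∫ t in Set.Ioi (0:ℝ), Real.exp (-z * Real.cosh t) * Real.cosh (ν * t)

/-!
Substituting `x = eᵘ` gives `∫₀^∞ K₁(2a cosh u) du`, the case `ν = 1/2` of
`∫₀^∞ K_{2ν}(2a cosh u) du = K_ν(a)² / 2`. For the latter, write the Bessel functions as
integrals over `ℝ`; since `2 cosh u cosh (s - u) = cosh s + cosh (s - 2u)`, the substitutions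
`t = s - u` and then `q = s - 2u` factor the double integral into
`(∫ e^{-a cosh q} cosh (ν q) dq)² / 2`, the odd parts `sinh (ν q)` integrating to zero.
Finally `K_{1/2}(a) = √(π / (2a)) e^{-a}` is a Gaussian integral after `y = sinh (t / 2)`,
because `cosh t = 1 + 2 sinh² (t / 2)`.
-/

open Set Filter

lemma cosh_eq_one_add_two_mul_sinh_half_sq (t : ℝ) : cosh t = 1 + 2 * sinh (t / 2) ^ 2 := by
  have h := cosh_two_mul (t / 2)
  rw [mul_div_cancel₀ t two_ne_zero, cosh_sq'] at h
  linarith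

lemma one_add_sq_div_two_le_cosh (t : ℝ) : 1 + t ^ 2 / 2 ≤ cosh t := by
  have h : (t / 2) ^ 2 ≤ sinh (t / 2) ^ 2 :=
    sq_le_sq.mpr (by rw [abs_sinh]; exact self_le_sinh_iff.mpr (abs_nonneg _))
  rw [cosh_eq_one_add_two_mul_sinh_half_sq]
  linarith

lemma two_mul_cosh_mul_cosh_sub (u s : ℝ) :
    2 * cosh u * cosh (s - u) = cosh s + cosh (s - 2 * u) := by
  have e1 := cosh_add u (s - u)
  have e2 := cosh_sub (s - u) u
  rw [add_sub_cancel] at e1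
  rw [show s - u - u = s - 2 * u by ring] at e2
  linear_combination -e1 - e2

lemma besselK_eq_integral_div_two (ν z : ℝ) :
    besselK ν z = (∫ t, exp (-z * cosh t) * cosh (ν * t)) / 2 := by
  have h := integral_comp_abs (f := fun t => exp (-z * cosh t) * cosh (ν * t))
  have heven :
      ∀ t, exp (-z * cosh |t|) * cosh (ν * |t|) = exp (-z * cosh t) * cosh (ν * t) := by
    intro t
    rcases abs_choice t with ht | ht <;> simp only [ht, cosh_neg, mul_neg]
  simp only [heven] at h
  rw [besselK, h]
  ring

section

variable {a : ℝ}

lemma integrable_exp_neg_mul_cosh_mul_exp (ha : 0 < a) (c : ℝ) :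
    Integrable fun t => exp (-a * cosh t) * exp (c * t) := by
  refine (((integrable_exp_neg_mul_sq (b := a / 4) (by positivity)).const_mul
    (exp (c ^ 2 / a - a))).mono' (by fun_prop) (Eventually.of_forall fun t => ?_))
  rw [norm_of_nonneg (by positivity), ← exp_add, ← exp_add, exp_le_exp]
  -- `cosh t ≥ 1 + t² / 2`, then complete the square in `-(a / 4) t² + c t`
  have hcosh := mul_le_mul_of_nonneg_left (one_add_sq_div_two_le_cosh t) ha.le
  have hsq : a * t ^ 2 / 4 - c * t + c ^ 2 / a = (a * t - 2 * c) ^ 2 / (4 * a) := by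
    field_simp; ring
  have : 0 ≤ (a * t - 2 * c) ^ 2 / (4 * a) := by positivity
  linarith

lemma integrable_exp_neg_mul_cosh_mul_cosh (ha : 0 < a) (ν : ℝ) :
    Integrable fun t => exp (-a * cosh t) * cosh (ν * t) := by
  refine (((integrable_exp_neg_mul_cosh_mul_exp ha ν).add
    (integrable_exp_neg_mul_cosh_mul_exp ha (-ν))).div_const 2).congr
    (Eventually.of_forall fun t => ?_)
  simp only [Pi.add_apply, cosh_eq, neg_mul]
  ring

lemma integrable_exp_neg_mul_cosh_mul_sinh (ha : 0 < a) (ν : ℝ) :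
    Integrable fun t => exp (-a * cosh t) * sinh (ν * t) := by
  refine (((integrable_exp_neg_mul_cosh_mul_exp ha ν).sub
    (integrable_exp_neg_mul_cosh_mul_exp ha (-ν))).div_const 2).congr
    (Eventually.of_forall fun t => ?_)
  simp only [Pi.sub_apply, sinh_eq, neg_mul]
  ring

lemma integrable_exp_neg_two_mul_cosh_mul_cosh (ha : 0 < a) (ν : ℝ) :
    Integrable (fun p : ℝ × ℝ => exp (-(2 * a * cosh p.1) * cosh p.2) * cosh (ν * p.2))
      (volume.prod volume) := by
  have hconst : Integrable fun u => exp (-a * cosh u) := by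
    simpa using integrable_exp_neg_mul_cosh_mul_cosh ha 0
  refine (hconst.mul_prod (integrable_exp_neg_mul_cosh_mul_cosh ha ν)).mono' (by fun_prop)
    (Eventually.of_forall fun p => ?_)
  have hsum : cosh p.1 + cosh p.2 ≤ 2 * cosh p.1 * cosh p.2 := by
    nlinarith [one_le_cosh p.1, one_le_cosh p.2]
  have hexp :
      exp (-(2 * a * cosh p.1) * cosh p.2) ≤ exp (-a * cosh p.1) * exp (-a * cosh p.2) := by
    rw [← exp_add, exp_le_exp]
    nlinarith [mul_le_mul_of_nonneg_left hsum ha.le]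
  rw [norm_mul, norm_of_nonneg (exp_pos _).le, norm_of_nonneg (cosh_pos _).le, ← mul_assoc]
  exact mul_le_mul_of_nonneg_right hexp (cosh_pos _).le

lemma integral_exp_neg_mul_cosh_mul_sinh (ν : ℝ) :
    ∫ t, exp (-a * cosh t) * sinh (ν * t) = 0 := by
  have h := integral_neg_eq_self (fun t => exp (-a * cosh t) * sinh (ν * t)) volume
  simp only [cosh_neg, mul_neg, sinh_neg, integral_neg] at h
  linarith

lemma integral_exp_neg_mul_cosh_mul_cosh_add (ha : 0 < a) (ν s : ℝ) :
    ∫ q, exp (-a * cosh q) * cosh (ν * (s + q))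
      = cosh (ν * s) * ∫ q, exp (-a * cosh q) * cosh (ν * q) := by
  have hsplit : ∀ q, exp (-a * cosh q) * cosh (ν * (s + q))
      = cosh (ν * s) * (exp (-a * cosh q) * cosh (ν * q))
        + sinh (ν * s) * (exp (-a * cosh q) * sinh (ν * q)) := by
    intro q
    rw [mul_add, cosh_add]
    ring
  simp only [hsplit]
  rw [integral_add ((integrable_exp_neg_mul_cosh_mul_cosh ha ν).const_mul _)
      ((integrable_exp_neg_mul_cosh_mul_sinh ha ν).const_mul _),
    integral_const_mul, integral_const_mul, integral_exp_neg_mul_cosh_mul_sinh, mul_zero, add_zero]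

lemma integral_exp_neg_two_mul_cosh_mul_cosh_sub (ha : 0 < a) (ν s : ℝ) :
    ∫ u, exp (-(2 * a * cosh u) * cosh (s - u)) * cosh (2 * ν * (s - u))
      = exp (-a * cosh s) * cosh (ν * s) * (∫ q, exp (-a * cosh q) * cosh (ν * q)) / 2 := by
  set h : ℝ → ℝ := fun q => exp (-a * cosh q) * cosh (ν * (s + q)) with h_def
  have hpt : ∀ u, exp (-(2 * a * cosh u) * cosh (s - u)) * cosh (2 * ν * (s - u))
      = exp (-a * cosh s) * h (s - 2 * u) := by
    intro u
    have hexp : -(2 * a * cosh u) * cosh (s - u) = -a * cosh s + -a * cosh (s - 2 * u) := by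
      linear_combination -a * two_mul_cosh_mul_cosh_sub u s
    rw [h_def, hexp, exp_add, show 2 * ν * (s - u) = ν * (s + (s - 2 * u)) by ring]
    ring
  have hscale : ∫ u, h (s - 2 * u) = (∫ q, h q) / 2 := by
    rw [Measure.integral_comp_mul_left (fun v => h (s - v)) 2, integral_sub_left_eq_self,
      smul_eq_mul]
    norm_num
    ring
  simp only [hpt]
  rw [integral_const_mul, hscale, h_def, integral_exp_neg_mul_cosh_mul_cosh_add ha]
  ring

lemma integral_integral_exp_neg_two_mul_cosh_mul_cosh (ha : 0 < a) (ν : ℝ) :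
    ∫ u, ∫ t, exp (-(2 * a * cosh u) * cosh t) * cosh (2 * ν * t)
      = (∫ t, exp (-a * cosh t) * cosh (ν * t)) ^ 2 / 2 := by
  have hshift : ∀ u, ∫ t, exp (-(2 * a * cosh u) * cosh t) * cosh (2 * ν * t)
      = ∫ s, exp (-(2 * a * cosh u) * cosh (s - u)) * cosh (2 * ν * (s - u)) :=
    fun u => (integral_sub_right_eq_self
      (fun t => exp (-(2 * a * cosh u) * cosh t) * cosh (2 * ν * t)) u).symm
  have hint := integrable_exp_neg_two_mul_cosh_mul_cosh ha (2 * ν)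
  have hsheared := ((measurePreserving_prod_sub volume volume).integrable_comp
    hint.aestronglyMeasurable).mpr hint
  simp only [hshift]
  rw [integral_integral_swap (f := fun u s =>
    exp (-(2 * a * cosh u) * cosh (s - u)) * cosh (2 * ν * (s - u))) hsheared]
  simp only [integral_exp_neg_two_mul_cosh_mul_cosh_sub ha]
  rw [integral_div, integral_mul_const]
  ring

theorem integral_besselK_two_mul_cosh_Ioi (ha : 0 < a) (ν : ℝ) :
    ∫ u in Ioi 0, besselK (2 * ν) (2 * a * cosh u) = besselK ν a ^ 2 / 2 := by
  have heven := integral_comp_abs (f := fun u => besselK (2 * ν) (2 * a * cosh u))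
  simp only [cosh_abs] at heven
  have hfull : ∫ u, besselK (2 * ν) (2 * a * cosh u)
      = (∫ t, exp (-a * cosh t) * cosh (ν * t)) ^ 2 / 4 := by
    simp only [besselK_eq_integral_div_two]
    rw [integral_div, integral_integral_exp_neg_two_mul_cosh_mul_cosh ha]
    ring
  rw [besselK_eq_integral_div_two ν a]
  linear_combination (-heven + hfull) / 2

end

theorem besselK_one_half (a : ℝ) : besselK (1 / 2) a = √(π / (2 * a)) * exp (-a) := by
  have himage : (fun t => sinh (t / 2)) '' Ioi 0 = Ioi 0 := by
    ext y
    constructor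
    · rintro ⟨t, ht, rfl⟩
      exact sinh_pos_iff.mpr (half_pos ht)
    · intro hy
      refine ⟨2 * arsinh y, by simpa using arsinh_pos_iff.mpr hy, ?_⟩
      simp [sinh_arsinh]
  have hderiv : ∀ t, HasDerivAt (fun t => sinh (t / 2)) (cosh (t / 2) * (1 / 2)) t :=
    fun t => ((hasDerivAt_id' t).div_const 2).sinh
  have hsubst := integral_image_eq_integral_abs_deriv_smul (measurableSet_Ioi (a := 0))
    (fun t _ => (hderiv t).hasDerivWithinAt)
    (fun x _ y _ hxy => by linarith [sinh_injective hxy])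
    (fun y => 2 * exp (-a) * exp (-(2 * a) * y ^ 2))
  rw [himage, integral_const_mul, integral_gaussian_Ioi] at hsubst
  calc besselK (1 / 2) a
      = ∫ t in Ioi 0,
          |cosh (t / 2) * (1 / 2)| • (2 * exp (-a) * exp (-(2 * a) * sinh (t / 2) ^ 2)) := by
        refine setIntegral_congr_fun measurableSet_Ioi fun t _ => ?_
        rw [smul_eq_mul, abs_of_pos (by positivity), cosh_eq_one_add_two_mul_sinh_half_sq t,
          mul_comm (1 / 2) t, ← mul_div_assoc, mul_one]
        rw [show -a * (1 + 2 * sinh (t / 2) ^ 2) = -a + -(2 * a) * sinh (t / 2) ^ 2 by ring,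
          exp_add]
        ring
    _ = √(π / (2 * a)) * exp (-a) := by rw [← hsubst]; ring

theorem integral_inv_besselK_one (a : ℝ) (ha : 0 < a) :
    ∫ x in Set.Ioi (1:ℝ), (1 / x) * besselK 1 (a * (x ^ 2 + 1) / x)
      = (π / (4 * a)) * Real.exp (-2 * a) := by
  have hlog : ∀ x ∈ Ioi (1 : ℝ), (1 / x) * besselK 1 (a * (x ^ 2 + 1) / x)
      = x⁻¹ • besselK (2 * (1 / 2)) (2 * a * cosh (log x)) := by
    intro x hx
    have hx0 : 0 < x := one_pos.trans hx
    rw [smul_eq_mul, one_div, cosh_log hx0, mul_one_div_cancel two_ne_zero]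
    congr 2
    field_simp
  rw [setIntegral_congr_fun measurableSet_Ioi hlog,
    integral_comp_log_Ioi (fun u => besselK (2 * (1 / 2)) (2 * a * cosh u)) one_pos, log_one,
    integral_besselK_two_mul_cosh_Ioi ha, besselK_one_half, mul_pow, sq_sqrt (by positivity),
    ← exp_nat_mul]
  field_simp
  ring_nf
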